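/- On every frame whose accessibility relation is an equivalence relation (S5 frame), the sequents ■p ⊢ p (truthfulness), ■p ⊢ ■■p (positive introspection), and ♦p ⊢ ■♦p (negative introspection) are valid, where ♦φ abbreviates ¬■¬φ. -/

import Mathlib

/-- Formulas of the language with ¬, ∧, ∨, □, ■, 𝐈 and ▲. -/
inductive Form : Type
  | var : ℕ → Form
  | neg : Form → Form
  | conj : Form → Form → Form
  | disj : Form → Form → Form
  | box : Form → Form
  | bbox : Form → Form
  | ign : Form → Form
  | tri : Form → Form

/-- A Kripke model for Belnap–Dunn modal logic. -/
structure Model (W : Type) where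
  R : W → W → Prop
  vp : ℕ → W → Prop
  vn : ℕ → W → Prop

mutual
  /-- support of truth -/
  def tr {W : Type} (M : Model W) : Form → W → Prop
    | .var n, w => M.vp n w
    | .neg φ, w => fa M φ w
    | .conj φ ψ, w => tr M φ w ∧ tr M ψ w
    | .disj φ ψ, w => tr M φ w ∨ tr M ψ w
    | .box φ, w => ∀ w', M.R w w' → tr M φ w'
    | .bbox φ, w => (∀ w', M.R w w' → tr M φ w') ∧
        ∀ w₁ w₂, M.R w w₁ → M.R w w₂ → fa M φ w₁ → fa M φ w₂
    | .ign φ, w => tr M φ w ∧ (∀ w', M.R w w' → w' ≠ w → fa M φ w') ∧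
        ∀ w₁ w₂, M.R w w₁ → w₁ ≠ w → M.R w w₂ → w₂ ≠ w → tr M φ w₁ → tr M φ w₂
    | .tri φ, w => (∀ w₁ w₂, M.R w w₁ → M.R w w₂ →
          (tr M φ w₁ → tr M φ w₂) ∧ (fa M φ w₁ → fa M φ w₂)) ∧
        ∀ w', M.R w w' → tr M φ w' ∨ fa M φ w'
  /-- support of falsity -/
  def fa {W : Type} (M : Model W) : Form → W → Prop
    | .var n, w => M.vn n w
    | .neg φ, w => tr M φ w
    | .conj φ ψ, w => fa M φ w ∨ fa M ψ w
    | .disj φ ψ, w => fa M φ w ∧ fa M ψ w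
    | .box φ, w => ∃ w', M.R w w' ∧ fa M φ w'
    | .bbox φ, w => (∃ w', M.R w w' ∧ fa M φ w') ∨
        ∃ w₁ w₂, M.R w w₁ ∧ M.R w w₂ ∧ tr M φ w₁ ∧ ¬ tr M φ w₂
    | .ign φ, w => fa M φ w ∨ (∃ w', M.R w w' ∧ w' ≠ w ∧ tr M φ w') ∨
        ∃ w₁ w₂, (M.R w w₁ ∧ w₁ ≠ w) ∧ (M.R w w₂ ∧ w₂ ≠ w) ∧ ¬ fa M φ w₁ ∧ fa M φ w₂
    | .tri φ, w => (∃ w₁ w₂, M.R w w₁ ∧ M.R w w₂ ∧ tr M φ w₁ ∧ ¬ tr M φ w₂) ∨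
        (∃ w₁ w₂, M.R w w₁ ∧ M.R w w₂ ∧ fa M φ w₁ ∧ ¬ fa M φ w₂) ∨
        (∃ w₁ w₂, M.R w w₁ ∧ M.R w w₂ ∧ tr M φ w₁ ∧ fa M φ w₂)
end

/-- φ contains an occurrence of □ -/
def hasBox : Form → Prop
  | .var _ => False
  | .neg φ => hasBox φ
  | .conj φ ψ => hasBox φ ∨ hasBox ψ
  | .disj φ ψ => hasBox φ ∨ hasBox ψ
  | .box _ => True
  | .bbox φ => hasBox φ
  | .ign φ => hasBox φ
  | .tri φ => hasBox φ

/-- φ contains an occurrence of ■ -/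
def hasBBox : Form → Prop
  | .var _ => False
  | .neg φ => hasBBox φ
  | .conj φ ψ => hasBBox φ ∨ hasBBox ψ
  | .disj φ ψ => hasBBox φ ∨ hasBBox ψ
  | .box φ => hasBBox φ
  | .bbox _ => True
  | .ign φ => hasBBox φ
  | .tri φ => hasBBox φ

/-- φ contains an occurrence of 𝐈 -/
def hasIgn : Form → Prop
  | .var _ => False
  | .neg φ => hasIgn φ
  | .conj φ ψ => hasIgn φ ∨ hasIgn ψ
  | .disj φ ψ => hasIgn φ ∨ hasIgn ψ
  | .box φ => hasIgn φ
  | .bbox φ => hasIgn φ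
  | .ign _ => True
  | .tri φ => hasIgn φ

/-- φ contains an occurrence of ▲ -/
def hasTri : Form → Prop
  | .var _ => False
  | .neg φ => hasTri φ
  | .conj φ ψ => hasTri φ ∨ hasTri ψ
  | .disj φ ψ => hasTri φ ∨ hasTri ψ
  | .box φ => hasTri φ
  | .bbox φ => hasTri φ
  | .ign φ => hasTri φ
  | .tri _ => True

/-- validity of the sequent φ ⊢ χ on the frame (W,R) -/
def validOn {W : Type} (R : W → W → Prop) (φ χ : Form) : Prop :=
  ∀ (vp vn : ℕ → W → Prop) (w : W), tr ⟨R, vp, vn⟩ φ w → tr ⟨R, vp, vn⟩ χ w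

/-- ♦φ := ¬■¬φ -/
def dia (φ : Form) : Form := .neg (.bbox (.neg φ))

/-! On an S5 frame every world sees exactly its own equivalence class, so the truth and falsity of
any `■`-formula, and hence of any `♦`-formula, are constant on classes. A formula with constant
values on classes meets both clauses of `■` at any world where it is true: all successors make it
true, and all successors agree on its falsity. Truthfulness is just reflexivity. -/

section

variable {W : Type} (M : Model W)

def RelInvariant (ψ : Form) : Prop :=
  ∀ u v, M.R u v → (tr M ψ u ↔ tr M ψ v) ∧ (fa M ψ u ↔ fa M ψ v)

variable {M}

theorem RelInvariant.neg {ψ : Form} (hψ : RelInvariant M ψ) : RelInvariant M (.neg ψ) :=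
  fun u v huv => (hψ u v huv).symm

theorem relInvariant_bbox (hR : Equivalence M.R) (φ : Form) : RelInvariant M (.bbox φ) := by
  intro u v huv
  have hsucc : ∀ x, M.R u x ↔ M.R v x :=
    fun x => ⟨hR.trans (hR.symm huv), hR.trans huv⟩
  simp only [tr, fa, hsucc, and_self]

theorem relInvariant_dia (hR : Equivalence M.R) (φ : Form) : RelInvariant M (dia φ) :=
  (relInvariant_bbox hR _).neg

theorem tr_of_tr_bbox (hR : ∀ w, M.R w w) {φ : Form} {w : W} (h : tr M (.bbox φ) w) :
    tr M φ w :=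
  h.1 w (hR w)

theorem tr_bbox_of_relInvariant {ψ : Form} (hψ : RelInvariant M ψ) {w : W} (h : tr M ψ w) :
    tr M (.bbox ψ) w :=
  ⟨fun _ hw' => (hψ w _ hw').1.mp h,
    fun _ _ hw₁ hw₂ hfa => (hψ w _ hw₂).2.mp ((hψ w _ hw₁).2.mpr hfa)⟩

end

/-- on S5 frames, truthfulness, positive and negative introspection hold for ■. -/
theorem bbox_S5_introspection {W : Type} [Nonempty W]
    (R : W → W → Prop) (h : Equivalence R) :
    validOn R (.bbox (.var 0)) (.var 0) ∧
    validOn R (.bbox (.var 0)) (.bbox (.bbox (.var 0))) ∧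
    validOn R (dia (.var 0)) (.bbox (dia (.var 0))) :=
  ⟨fun _ _ _ => tr_of_tr_bbox h.refl,
    fun _ _ _ => tr_bbox_of_relInvariant (relInvariant_bbox h _),
    fun _ _ _ => tr_bbox_of_relInvariant (relInvariant_dia h _)⟩
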